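/- Let 𝕏 ∈ ℝ^{n×a}, 𝕐 ∈ ℝ^{n×b}, and w ∈ ℝ^n. Assume S_X = 𝕏ᵀ𝕏/n, S_Y = 𝕐ᵀ𝕐/n and the Gram matrix of (𝕐, w) are positive definite, and let e = w − 𝕐(𝕐ᵀ𝕐)^{-1}𝕐ᵀ w. If ‖C(𝕐,𝕏)‖_F + ‖C(e,𝕏)‖_F > 0, then ‖C((𝕐,w),𝕏)‖_F − ‖C(𝕐,𝕏)‖_F = ‖C(e,𝕏)‖_F² / ( √(‖C(𝕐,𝕏)‖_F² + ‖C(e,𝕏)‖_F²) + ‖C(𝕐,𝕏)‖_F ). -/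

import Mathlib

open Matrix

noncomputable section

/-- Squared Frobenius norm of a real matrix: `‖M‖_F² = tr (M Mᵀ)`. -/
def frobSq {m n : Type*} [Fintype m] [Fintype n] (M : Matrix m n ℝ) : ℝ :=
  Matrix.trace (M * Mᵀ)

/-- Frobenius norm of a real matrix. -/
def frobNorm {m n : Type*} [Fintype m] [Fintype n] (M : Matrix m n ℝ) : ℝ :=
  Real.sqrt (frobSq M)

/-- The square root of a positive semidefinite matrix, as `Matrix.PosSemidef.sqrt` was defined
in the older Mathlib (removed since): `U * diagonal (√ eigenvalues) * Uᴴ`. -/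
def posSemidefSqrt {n : Type*} [Fintype n] [DecidableEq n] {A : Matrix n n ℝ}
    (hA : A.PosSemidef) : Matrix n n ℝ :=
  hA.1.eigenvectorUnitary.1 * diagonal ((√·) ∘ hA.1.eigenvalues) *
    (star hA.1.eigenvectorUnitary : Matrix n n ℝ)

open Classical in
/-- `A^{-1/2}`: the inverse of the unique positive definite square root of a positive
definite matrix `A` (junk value `0` if `A` is not positive definite). -/
def invSqrt {n : Type*} [Fintype n] [DecidableEq n] (A : Matrix n n ℝ) : Matrix n n ℝ :=
  if h : A.PosDef then (posSemidefSqrt h.posSemidef)⁻¹ else 0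

/-- The sample coherence matrix `C(𝕐,𝕏) = n⁻¹ S_Y^{-1/2} 𝕐ᵀ 𝕏 S_X^{-1/2}`, where
`S_X = 𝕏ᵀ𝕏/n` and `S_Y = 𝕐ᵀ𝕐/n`. -/
def coh {ν a b : Type*} [Fintype ν] [Fintype a] [Fintype b] [DecidableEq a] [DecidableEq b]
    (N : ℕ) (Y : Matrix ν b ℝ) (X : Matrix ν a ℝ) : Matrix b a ℝ :=
  (N : ℝ)⁻¹ • (invSqrt ((N : ℝ)⁻¹ • (Yᵀ * Y)) * Yᵀ * X * invSqrt ((N : ℝ)⁻¹ • (Xᵀ * X)))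

/-- The matrix obtained from `X` by appending the vector `z` as an extra column. -/
def appendCol {ν a : Type*} (X : Matrix ν a ℝ) (z : ν → ℝ) : Matrix ν (a ⊕ Unit) ℝ :=
  Matrix.of fun i => Sum.elim (X i) fun _ => z i

/-- A vector viewed as a one-column matrix. -/
def colM {ν : Type*} (z : ν → ℝ) : Matrix ν Unit ℝ :=
  Matrix.of fun i _ => z i

/-- The least-squares residual of `z` regressed on the columns of `X`:
`r = z − X (XᵀX)⁻¹ Xᵀ z`. -/
def resid {ν a : Type*} [Fintype ν] [Fintype a] [DecidableEq a]
    (X : Matrix ν a ℝ) (z : ν → ℝ) : ν → ℝ :=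
  z - (X * (Xᵀ * X)⁻¹ * Xᵀ).mulVec z

/-!
Write `P_M = M (MᵀM)⁻¹ Mᵀ` for the orthogonal projection onto the column space of `M`. The
square roots `S^{-1/2}` are symmetric with square `S⁻¹`, so they cancel in the squared Frobenius
norm: `‖C(𝕐,𝕏)‖_F² = tr (P_𝕏 P_𝕐)`. Subtracting from `w` its least-squares fit `𝕐c` is an
invertible column operation taking `(𝕐, w)` to `(𝕐, e)`, and `e ⟂ 𝕐`, so
`P_{(𝕐,w)} = P_𝕐 + P_e` and the Pillai trace is additive:
`‖C((𝕐,w),𝕏)‖_F² = ‖C(𝕐,𝕏)‖_F² + ‖C(e,𝕏)‖_F²`. The identity is then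
`√(p + q) − √p = q / (√(p + q) + √p)`.
-/

lemma Matrix.inv_smul_of_ne_zero {n K : Type*} [Fintype n] [DecidableEq n] [Field K]
    {c : K} (hc : c ≠ 0) (A : Matrix n n K) : (c • A)⁻¹ = c⁻¹ • A⁻¹ := by
  by_cases hA : IsUnit A.det
  · exact inv_smul' A (Units.mk0 c hc) hA
  · have hcA : ¬IsUnit (c • A).det := by simpa [det_smul, hc] using hA
    rw [nonsing_inv_apply_not_isUnit _ hA, nonsing_inv_apply_not_isUnit _ hcA, smul_zero]

section Sqrt

variable {n : Type*} [Fintype n] [DecidableEq n]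

lemma posSemidefSqrt_eq_conjStarAlgAut {A : Matrix n n ℝ} (hA : A.PosSemidef) :
    posSemidefSqrt hA = Unitary.conjStarAlgAut ℝ _ hA.1.eigenvectorUnitary
      (diagonal ((√·) ∘ hA.1.eigenvalues)) := rfl

lemma posSemidefSqrt_mul_self {A : Matrix n n ℝ} (hA : A.PosSemidef) :
    posSemidefSqrt hA * posSemidefSqrt hA = A := by
  rw [posSemidefSqrt_eq_conjStarAlgAut, ← map_mul, diagonal_mul_diagonal]
  conv_rhs => rw [hA.1.spectral_theorem]
  congr 2
  funext i
  simp [Real.mul_self_sqrt (hA.eigenvalues_nonneg i)]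

lemma transpose_posSemidefSqrt {A : Matrix n n ℝ} (hA : A.PosSemidef) :
    (posSemidefSqrt hA)ᵀ = posSemidefSqrt hA := by
  rw [← conjTranspose_eq_transpose_of_trivial, posSemidefSqrt_eq_conjStarAlgAut,
    ← star_eq_conjTranspose, ← map_star, star_eq_conjTranspose, diagonal_conjTranspose,
    star_trivial]

lemma transpose_invSqrt (A : Matrix n n ℝ) : (invSqrt A)ᵀ = invSqrt A := by
  unfold invSqrt
  split_ifs with hA
  · rw [transpose_nonsing_inv, transpose_posSemidefSqrt]
  · exact transpose_zero

lemma invSqrt_mul_self {A : Matrix n n ℝ} (hA : A.PosDef) : invSqrt A * invSqrt A = A⁻¹ := by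
  rw [invSqrt, dif_pos hA, ← Matrix.mul_inv_rev, posSemidefSqrt_mul_self]

lemma invSqrt_smul_mul_self {c : ℝ} (hc : c ≠ 0) {G : Matrix n n ℝ} (hG : (c • G).PosDef) :
    invSqrt (c • G) * invSqrt (c • G) = c⁻¹ • G⁻¹ := by
  rw [invSqrt_mul_self hG, inv_smul_of_ne_zero hc]

end Sqrt

section Frobenius

variable {m n p : Type*} [Fintype m] [Fintype n] [Fintype p]

lemma frobSq_nonneg (M : Matrix m n ℝ) : 0 ≤ frobSq M := by
  simpa [frobSq, conjTranspose_eq_transpose_of_trivial] using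
    (posSemidef_self_mul_conjTranspose M).trace_nonneg

lemma frobSq_smul (c : ℝ) (M : Matrix m n ℝ) : frobSq (c • M) = c ^ 2 * frobSq M := by
  simp [frobSq, transpose_smul, trace_smul, smul_smul, sq]

lemma frobSq_mul_mul (R : Matrix p m ℝ) (M : Matrix m n ℝ) (Q : Matrix n n ℝ) :
    frobSq (R * M * Q) = trace (M * (Q * Qᵀ) * Mᵀ * (Rᵀ * R)) := by
  have h : R * M * Q * (R * M * Q)ᵀ = R * (M * Q * Qᵀ * Mᵀ * Rᵀ) := by
    simp only [transpose_mul, Matrix.mul_assoc]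
  rw [frobSq, h, trace_mul_comm]
  simp only [Matrix.mul_assoc]

end Frobenius

def colProj {R ν c : Type*} [CommRing R] [Fintype ν] [Fintype c] [DecidableEq c]
    (M : Matrix ν c R) : Matrix ν ν R :=
  M * (Mᵀ * M)⁻¹ * Mᵀ

lemma frobSq_coh {ν a b : Type*} [Fintype ν] [Fintype a] [Fintype b] [DecidableEq a]
    [DecidableEq b] {N : ℕ} (hN : 0 < (N : ℝ)) {X : Matrix ν a ℝ} {Y : Matrix ν b ℝ}
    (hSX : ((N : ℝ)⁻¹ • (Xᵀ * X)).PosDef) (hSY : ((N : ℝ)⁻¹ • (Yᵀ * Y)).PosDef) :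
    frobSq (coh N Y X) = trace (colProj X * colProj Y) := by
  have hN' : (N : ℝ)⁻¹ ≠ 0 := inv_ne_zero hN.ne'
  calc frobSq (coh N Y X)
      = (N : ℝ)⁻¹ ^ 2 *
          trace (Yᵀ * X * ((N : ℝ) • (Xᵀ * X)⁻¹) * Xᵀ * Y * ((N : ℝ) • (Yᵀ * Y)⁻¹)) := by
        rw [coh, frobSq_smul, Matrix.mul_assoc _ Yᵀ, frobSq_mul_mul, transpose_invSqrt,
          transpose_invSqrt, invSqrt_smul_mul_self hN' hSX, invSqrt_smul_mul_self hN' hSY,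
          inv_inv, transpose_mul, transpose_transpose]
        simp only [Matrix.mul_assoc]
    _ = trace (Yᵀ * (X * (Xᵀ * X)⁻¹ * Xᵀ * Y * (Yᵀ * Y)⁻¹)) := by
        simp only [Matrix.mul_smul, Matrix.smul_mul, trace_smul, smul_eq_mul, Matrix.mul_assoc]
        field_simp
    _ = trace (colProj X * colProj Y) := by
        rw [trace_mul_comm, colProj, colProj]
        simp only [Matrix.mul_assoc]

section ColProj

variable {R ν b c : Type*} [CommRing R] [Fintype ν] [Fintype b] [Fintype c] [DecidableEq b]
  [DecidableEq c]

lemma colProj_mul_of_isUnit (M : Matrix ν c R) {T : Matrix c c R} (hT : IsUnit T) :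
    colProj (M * T) = colProj M := by
  have hdet : IsUnit T.det := (isUnit_iff_isUnit_det T).1 hT
  have hTT : T * T⁻¹ = 1 := mul_nonsing_inv T hdet
  have hTTt : Tᵀ⁻¹ * Tᵀ = 1 := nonsing_inv_mul Tᵀ (by rwa [det_transpose])
  calc colProj (M * T)
      = M * (T * T⁻¹) * (Mᵀ * M)⁻¹ * (Tᵀ⁻¹ * Tᵀ) * Mᵀ := by
        rw [colProj, transpose_mul, show Tᵀ * Mᵀ * (M * T) = Tᵀ * (Mᵀ * M) * T by
          simp only [Matrix.mul_assoc], Matrix.mul_inv_rev, Matrix.mul_inv_rev]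
        simp only [Matrix.mul_assoc]
    _ = colProj M := by rw [hTT, hTTt, Matrix.mul_one, Matrix.mul_one, colProj]

lemma colProj_fromCols (Y : Matrix ν b R) (E : Matrix ν c R) (hYE : Yᵀ * E = 0)
    (hY : IsUnit (Yᵀ * Y)) (hE : IsUnit (Eᵀ * E)) :
    colProj (fromCols Y E) = colProj Y + colProj E := by
  have hEY : Eᵀ * Y = 0 := by simpa using congrArg transpose hYE
  rw [colProj, transpose_fromCols, fromRows_mul_fromCols, hYE, hEY,
    inv_fromBlocks_zero₂₁_of_isUnit_iff _ _ _ (iff_of_true hY hE)]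
  simp [fromCols_mul_fromBlocks, fromCols_mul_fromRows, colProj]

end ColProj

section Gram

variable {ν c : Type*} [Fintype ν] {M : Matrix ν c ℝ}

lemma Matrix.PosDef.transpose_mul_self_submatrix {d : Type*} [Fintype d] (hM : (Mᵀ * M).PosDef)
    {e : d → c} (he : Function.Injective e) :
    ((M.submatrix id e)ᵀ * M.submatrix id e).PosDef := by
  simpa [← submatrix_mul, transpose_submatrix] using hM.submatrix he

lemma Matrix.PosDef.transpose_mul_self_mul_right [Fintype c] [DecidableEq c]
    (hM : (Mᵀ * M).PosDef) {T : Matrix c c ℝ} (hT : IsUnit T) : ((M * T)ᵀ * (M * T)).PosDef := by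
  have h := (IsUnit.posDef_star_left_conjugate_iff hT).2 hM
  rw [star_eq_conjTranspose, conjTranspose_eq_transpose_of_trivial] at h
  simpa only [transpose_mul, Matrix.mul_assoc] using h

lemma Matrix.PosDef.nonempty_of_transpose_mul_self [Nonempty c] (hM : (Mᵀ * M).PosDef) :
    Nonempty ν := by
  by_contra h
  rw [not_nonempty_iff] at h
  obtain ⟨i⟩ := ‹Nonempty c›
  simpa [mul_apply] using hM.diag_pos (i := i)

end Gram

section Residual

variable {ν b : Type*} [Fintype ν] [Fintype b] [DecidableEq b]

lemma mul_colM {c : Type*} (A : Matrix c ν ℝ) (v : ν → ℝ) : A * colM v = colM (A *ᵥ v) := by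
  ext i j
  simp [colM, mul_apply, mulVec, dotProduct]

lemma resid_eq_sub_mulVec (Y : Matrix ν b ℝ) (w : ν → ℝ) :
    resid Y w = w - Y *ᵥ (((Yᵀ * Y)⁻¹ * Yᵀ) *ᵥ w) := by
  rw [resid, mulVec_mulVec, Matrix.mul_assoc]

lemma transpose_mul_colM_resid (Y : Matrix ν b ℝ) (w : ν → ℝ) (hY : IsUnit (Yᵀ * Y)) :
    Yᵀ * colM (resid Y w) = 0 := by
  have hYY : Yᵀ * Y * (Yᵀ * Y)⁻¹ = 1 := mul_nonsing_inv _ ((isUnit_iff_isUnit_det _).1 hY)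
  rw [mul_colM, resid_eq_sub_mulVec, mulVec_sub, mulVec_mulVec, mulVec_mulVec,
    ← Matrix.mul_assoc, hYY, Matrix.one_mul, sub_self]
  rfl

lemma exists_isUnit_appendCol_mul_eq_fromCols_resid (Y : Matrix ν b ℝ) (w : ν → ℝ) :
    ∃ T : Matrix (b ⊕ Unit) (b ⊕ Unit) ℝ, IsUnit T ∧
      appendCol Y w * T = fromCols Y (colM (resid Y w)) := by
  refine ⟨fromBlocks 1 (-colM (((Yᵀ * Y)⁻¹ * Yᵀ) *ᵥ w)) 0 1, ?_, ?_⟩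
  · simp [isUnit_iff_isUnit_det]
  · rw [show appendCol Y w = fromCols Y (colM w) from rfl, fromCols_mul_fromBlocks,
      Matrix.mul_neg, mul_colM, resid_eq_sub_mulVec]
    ext i (j | j) <;> simp [colM, sub_eq_neg_add]

lemma colProj_appendCol (Y : Matrix ν b ℝ) (w : ν → ℝ) (hY : IsUnit (Yᵀ * Y))
    (he : IsUnit ((colM (resid Y w))ᵀ * colM (resid Y w))) :
    colProj (appendCol Y w) = colProj Y + colProj (colM (resid Y w)) := by
  obtain ⟨T, hT, hMT⟩ := exists_isUnit_appendCol_mul_eq_fromCols_resid Y w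
  rw [← colProj_mul_of_isUnit _ hT, hMT,
    colProj_fromCols _ _ (transpose_mul_colM_resid Y w hY) hY he]

lemma posDef_transpose_mul_self_resid (Y : Matrix ν b ℝ) (w : ν → ℝ)
    (hG : ((appendCol Y w)ᵀ * appendCol Y w).PosDef) :
    ((colM (resid Y w))ᵀ * colM (resid Y w)).PosDef := by
  obtain ⟨T, hT, hMT⟩ := exists_isUnit_appendCol_mul_eq_fromCols_resid Y w
  have h := hG.transpose_mul_self_mul_right hT
  rw [hMT] at h
  exact h.transpose_mul_self_submatrix (e := Sum.inr) Sum.inr_injective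

end Residual

lemma Real.sqrt_add_sub_sqrt {p q : ℝ} (hp : 0 ≤ p) (hpq : 0 ≤ p + q) :
    √(p + q) - √p = q / (√(p + q) + √p) := by
  by_cases hd : √(p + q) + √p = 0
  · have h₁ : √(p + q) = 0 := by linarith [Real.sqrt_nonneg (p + q), Real.sqrt_nonneg p]
    have h₂ : √p = 0 := by linarith
    rw [hd, div_zero, h₁, h₂, sub_zero]
  · rw [eq_div_iff hd]
    nlinarith [Real.sq_sqrt hp, Real.sq_sqrt hpq]

theorem root_pillai_trace_increment_general (n a b : ℕ)
    (X : Matrix (Fin n) (Fin a) ℝ) (Y : Matrix (Fin n) (Fin b) ℝ) (w : Fin n → ℝ)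
    (hSX : ((n : ℝ)⁻¹ • (Xᵀ * X)).PosDef)
    (hGY : ((appendCol Y w)ᵀ * appendCol Y w).PosDef) :
    frobNorm (coh n (appendCol Y w) X) - frobNorm (coh n Y X) =
      frobSq (coh n (colM (resid Y w)) X) /
        (Real.sqrt (frobSq (coh n Y X) + frobSq (coh n (colM (resid Y w)) X))
          + frobNorm (coh n Y X)) := by
  have hY : (Yᵀ * Y).PosDef :=
    hGY.transpose_mul_self_submatrix (e := Sum.inl) Sum.inl_injective
  have hE := posDef_transpose_mul_self_resid Y w hGY
  have hn : 0 < (n : ℝ) :=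
    Nat.cast_pos.2 (Fin.pos_iff_nonempty.2 hE.nonempty_of_transpose_mul_self)
  have hn' : 0 < (n : ℝ)⁻¹ := inv_pos.2 hn
  have hadd : frobSq (coh n (appendCol Y w) X) =
      frobSq (coh n Y X) + frobSq (coh n (colM (resid Y w)) X) := by
    rw [frobSq_coh hn hSX (hY.smul hn'), frobSq_coh hn hSX (hGY.smul hn'),
      frobSq_coh hn hSX (hE.smul hn'), colProj_appendCol Y w hY.isUnit hE.isUnit, Matrix.mul_add,
      trace_add]
  rw [frobNorm, frobNorm, hadd,
    Real.sqrt_add_sub_sqrt (frobSq_nonneg _) (add_nonneg (frobSq_nonneg _) (frobSq_nonneg _))]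

/-- Increment of the sample root-Pillai trace `‖C‖_F` when a variable `w` is appended to the
`𝕐` block, expressed in terms of the increment of the Pillai trace: with
`e = w − 𝕐(𝕐ᵀ𝕐)⁻¹𝕐ᵀw`, if `‖C(𝕐,𝕏)‖_F + ‖C(e,𝕏)‖_F > 0` then
`‖C((𝕐,w),𝕏)‖_F − ‖C(𝕐,𝕏)‖_F
  = ‖C(e,𝕏)‖_F² / (√(‖C(𝕐,𝕏)‖_F² + ‖C(e,𝕏)‖_F²) + ‖C(𝕐,𝕏)‖_F)`. -/
theorem root_pillai_trace_increment (n a b : ℕ)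
    (X : Matrix (Fin n) (Fin a) ℝ) (Y : Matrix (Fin n) (Fin b) ℝ) (w : Fin n → ℝ)
    (hSX : ((n : ℝ)⁻¹ • (Xᵀ * X)).PosDef) (hSY : ((n : ℝ)⁻¹ • (Yᵀ * Y)).PosDef)
    (hGY : ((appendCol Y w)ᵀ * appendCol Y w).PosDef)
    (hpos : 0 < frobNorm (coh n Y X) + frobNorm (coh n (colM (resid Y w)) X)) :
    frobNorm (coh n (appendCol Y w) X) - frobNorm (coh n Y X) =
      frobSq (coh n (colM (resid Y w)) X) /
        (Real.sqrt (frobSq (coh n Y X) + frobSq (coh n (colM (resid Y w)) X))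
          + frobNorm (coh n Y X)) :=
  root_pillai_trace_increment_general n a b X Y w hSX hGY
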